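/- Var[G̃_ii] = K_ii² · ( Σ_{s=1}^D p_{is}·(3 − p_{is}) ) / ( Σ_{s=1}^D p_{is} )². (Proposition 2, exact variance formula for the bias-corrected diagonal Gram entry.) -/

import Mathlib

open MeasureTheory ProbabilityTheory Filter Finset Real
open scoped NNReal ENNReal

lemma gauss_pow_integrable (b : ℝ) (hb : 0 < b) (k : ℕ) :
    Integrable (fun x : ℝ => x ^ k * Real.exp (-b * x ^ 2)) := by
  have := integrable_rpow_mul_exp_neg_mul_sq hb (s := (k : ℝ))
    (by exact_mod_cast neg_one_lt_zero.trans_le (Nat.cast_nonneg k))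
  simpa [Real.rpow_natCast] using this

lemma gauss_even_integral (b : ℝ) (hb : 0 < b) (n : ℕ) :
    ∫ x : ℝ, x ^ (2 * n) * Real.exp (-b * x ^ 2)
      = b ^ (-(2 * (n:ℝ) + 1) / 2) * Real.Gamma ((2 * (n:ℝ) + 1) / 2) := by
  have hint := gauss_pow_integrable b hb (2 * n)
  have heven : ∀ x : ℝ, (-x) ^ (2 * n) * Real.exp (-b * (-x) ^ 2)
      = x ^ (2 * n) * Real.exp (-b * x ^ 2) := by
    intro x; rw [Even.neg_pow ⟨n, by ring⟩, neg_sq]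
  have hsplit : ∫ x : ℝ, x ^ (2 * n) * Real.exp (-b * x ^ 2)
      = 2 * ∫ x in Set.Ioi (0:ℝ), x ^ (2 * n) * Real.exp (-b * x ^ 2) := by
    have hIic : ∫ x in Set.Iic (0:ℝ), x ^ (2 * n) * Real.exp (-b * x ^ 2)
        = ∫ x in Set.Ioi (0:ℝ), x ^ (2 * n) * Real.exp (-b * x ^ 2) := by
      rw [show Set.Iic (0:ℝ) = Set.Iic (-(0:ℝ)) by norm_num,
        ← integral_comp_neg_Ioi]
      exact setIntegral_congr_fun measurableSet_Ioi fun x _ => heven x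
    rw [← integral_add_compl (measurableSet_Ioi (a := (0:ℝ))) hint, Set.compl_Ioi, hIic]
    ring
  rw [hsplit]
  have hIoi : ∫ x in Set.Ioi (0:ℝ), x ^ (2 * n) * Real.exp (-b * x ^ 2)
      = b ^ (-(2 * (n:ℝ) + 1) / 2) * (1 / 2) * Real.Gamma ((2 * (n:ℝ) + 1) / 2) := by
    have key := integral_rpow_mul_exp_neg_mul_rpow (p := 2) (q := ((2 * n : ℕ):ℝ)) (b := b)
      (by norm_num) (by exact_mod_cast neg_one_lt_zero.trans_le (Nat.cast_nonneg _)) hb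
    rw [show ∫ x in Set.Ioi (0:ℝ), x ^ (2 * n) * Real.exp (-b * x ^ 2)
        = ∫ x in Set.Ioi (0:ℝ), x ^ (((2 * n : ℕ)):ℝ) * Real.exp (-b * x ^ ((2:ℝ))) from ?_, key]
    · push_cast; ring_nf
    · refine setIntegral_congr_fun measurableSet_Ioi fun x hx => ?_
      rw [Real.rpow_natCast, show ((2:ℝ)) = ((2:ℕ):ℝ) by norm_num, Real.rpow_natCast]
  rw [hIoi]; ring

section GaussMoments

lemma gaussianPDFReal_zero_eq (v : ℝ≥0) (x : ℝ) :
    gaussianPDFReal 0 v x = (Real.sqrt (2 * π * v))⁻¹ * Real.exp (-(2 * (v:ℝ))⁻¹ * x ^ 2) := by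
  rw [gaussianPDFReal, sub_zero, neg_div, div_eq_inv_mul, neg_mul]

lemma integral_fun_gaussianReal (v : ℝ≥0) (hv : v ≠ 0) (g : ℝ → ℝ) :
    ∫ x, g x ∂(gaussianReal 0 v) = ∫ x, gaussianPDFReal 0 v x * g x := by
  rw [gaussianReal_of_var_ne_zero _ hv]
  have hpdf : (gaussianPDF 0 v)
      = fun x => ((Real.toNNReal (gaussianPDFReal 0 v x) : ℝ≥0) : ℝ≥0∞) := rfl
  rw [hpdf, integral_withDensity_eq_integral_smul
    ((measurable_gaussianPDFReal 0 v).real_toNNReal) g]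
  refine integral_congr_ae (Eventually.of_forall fun x => ?_)
  show _ • g x = _
  rw [NNReal.smul_def, Real.coe_toNNReal _ (gaussianPDFReal_nonneg 0 v x), smul_eq_mul]

lemma gaussianReal_pow_integrable (v : ℝ≥0) (hv : v ≠ 0) (k : ℕ) :
    Integrable (fun x : ℝ => x ^ k) (gaussianReal 0 v) := by
  have hv0 : (0:ℝ) < v := by positivity
  rw [gaussianReal_of_var_ne_zero _ hv]
  have hpdf : (gaussianPDF 0 v)
      = fun x => ((Real.toNNReal (gaussianPDFReal 0 v x) : ℝ≥0) : ℝ≥0∞) := rfl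
  rw [hpdf, integrable_withDensity_iff_integrable_smul
    ((measurable_gaussianPDFReal 0 v).real_toNNReal)]
  have hb : (0:ℝ) < (2 * (v:ℝ))⁻¹ := by positivity
  refine ((gauss_pow_integrable _ hb k).const_mul
    ((Real.sqrt (2 * π * v))⁻¹)).congr
    (Eventually.of_forall fun x => ?_)
  show _ = _ • x ^ k
  rw [NNReal.smul_def, Real.coe_toNNReal _ (gaussianPDFReal_nonneg 0 v x),
    gaussianPDFReal_zero_eq v x, smul_eq_mul]
  ring

lemma integral_pow_gaussianReal (v : ℝ≥0) (hv : v ≠ 0) (n : ℕ) :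
    ∫ x, x ^ (2 * n) ∂(gaussianReal 0 v)
      = (Real.sqrt (2 * π * v))⁻¹ * (((2 * (v:ℝ))⁻¹) ^ (-(2 * (n:ℝ) + 1) / 2)
          * Real.Gamma ((2 * (n:ℝ) + 1) / 2)) := by
  have hv0 : (0:ℝ) < v := by positivity
  have hb : (0:ℝ) < (2 * (v:ℝ))⁻¹ := by positivity
  rw [integral_fun_gaussianReal v hv]
  calc ∫ x, gaussianPDFReal 0 v x * x ^ (2 * n)
      = ∫ x, (Real.sqrt (2 * π * v))⁻¹ * (x ^ (2 * n) * Real.exp (-(2 * (v:ℝ))⁻¹ * x ^ 2)) := by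
        refine integral_congr_ae (Eventually.of_forall fun x => ?_)
        show gaussianPDFReal 0 v x * x ^ (2 * n) = _
        rw [gaussianPDFReal_zero_eq v x]; ring
    _ = (Real.sqrt (2 * π * v))⁻¹ * ∫ x, x ^ (2 * n) * Real.exp (-(2 * (v:ℝ))⁻¹ * x ^ 2) :=
        integral_const_mul _ _
    _ = _ := by rw [gauss_even_integral _ hb n]

lemma rpow_inv_neg_eq (v : ℝ≥0) (hv : v ≠ 0) (y : ℝ) :
    ((2 * (v:ℝ))⁻¹) ^ (-y) = (2 * (v:ℝ)) ^ y := by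
  have hv0 : (0:ℝ) < v := by positivity
  rw [Real.inv_rpow (by positivity), ← Real.rpow_neg (by positivity), neg_neg]

lemma integral_sq_gaussianReal (v : ℝ≥0) (hv : v ≠ 0) :
    ∫ x, x ^ 2 ∂(gaussianReal 0 v) = v := by
  have hv0 : (0:ℝ) < v := by positivity
  have h := integral_pow_gaussianReal v hv 1
  rw [show (2:ℕ) = 2 * 1 from rfl, h,
    show (-(2 * ((1:ℕ):ℝ) + 1) / 2) = -(3/2) by norm_num,
    rpow_inv_neg_eq v hv (3/2),
    show ((2 * ((1:ℕ):ℝ) + 1) / 2) = 3/2 by norm_num]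
  have hG : Real.Gamma (3 / 2) = (1 / 2) * Real.sqrt π := by
    rw [show (3/2 : ℝ) = 1/2 + 1 by norm_num, Real.Gamma_add_one (by norm_num),
      Real.Gamma_one_half_eq]
  have h32 : (2 * (v:ℝ)) ^ ((3:ℝ)/2) = (2 * (v:ℝ)) * Real.sqrt (2 * (v:ℝ)) := by
    rw [show (3/2 : ℝ) = 1 + 1/2 by norm_num, Real.rpow_add (by positivity),
      Real.rpow_one, ← Real.sqrt_eq_rpow]
  have hsq : Real.sqrt (2 * π * (v:ℝ)) = Real.sqrt (2 * (v:ℝ)) * Real.sqrt π := by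
    rw [← Real.sqrt_mul (by positivity)]; ring_nf
  rw [hG, h32, hsq]
  have hs : (0:ℝ) < Real.sqrt (2 * (v:ℝ)) := Real.sqrt_pos.mpr (by positivity)
  have ht : (0:ℝ) < Real.sqrt π := Real.sqrt_pos.mpr pi_pos
  field_simp

lemma integral_pow_four_gaussianReal (v : ℝ≥0) (hv : v ≠ 0) :
    ∫ x, x ^ 4 ∂(gaussianReal 0 v) = 3 * (v:ℝ) ^ 2 := by
  have hv0 : (0:ℝ) < v := by positivity
  have h := integral_pow_gaussianReal v hv 2
  rw [show (4:ℕ) = 2 * 2 from rfl, h,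
    show (-(2 * ((2:ℕ):ℝ) + 1) / 2) = -(5/2) by norm_num,
    rpow_inv_neg_eq v hv (5/2),
    show ((2 * ((2:ℕ):ℝ) + 1) / 2) = 5/2 by norm_num]
  have hG : Real.Gamma (5 / 2) = (3 / 4) * Real.sqrt π := by
    rw [show (5/2 : ℝ) = 3/2 + 1 by norm_num, Real.Gamma_add_one (by norm_num),
      show (3/2 : ℝ) = 1/2 + 1 by norm_num, Real.Gamma_add_one (by norm_num),
      Real.Gamma_one_half_eq]
    ring
  have h52 : (2 * (v:ℝ)) ^ ((5:ℝ)/2) = (2 * (v:ℝ)) ^ 2 * Real.sqrt (2 * (v:ℝ)) := by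
    rw [show (5/2 : ℝ) = 2 + 1/2 by norm_num, Real.rpow_add (by positivity),
      ← Real.sqrt_eq_rpow, Real.rpow_two]
  have hsq : Real.sqrt (2 * π * (v:ℝ)) = Real.sqrt (2 * (v:ℝ)) * Real.sqrt π := by
    rw [← Real.sqrt_mul (by positivity)]; ring_nf
  rw [hG, h52, hsq]
  have hs : (0:ℝ) < Real.sqrt (2 * (v:ℝ)) := Real.sqrt_pos.mpr (by positivity)
  have ht : (0:ℝ) < Real.sqrt π := Real.sqrt_pos.mpr pi_pos
  field_simp
  ring

end GaussMoments

/-- Proposition 2 (variance formula for the bias-corrected diagonal Gram entry). -/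
theorem bias_corrected_gram_diag_variance
    {Ω : Type*} [MeasurableSpace Ω] (μ : Measure Ω) [IsProbabilityMeasure μ]
    (Kii : ℝ) (hKii : 0 < Kii)
    (D : ℕ) (hD : 1 ≤ D)
    (pi : Fin D → ℝ) (hpi : ∀ s, 0 < pi s ∧ pi s ≤ 1)
    (Yt : Fin D → Ω → ℝ) (hYt : ∀ s, Measurable (Yt s))
    (hYtlaw : ∀ s, μ.map (Yt s) = gaussianReal 0 (Real.toNNReal Kii))
    (Hi : Fin D → Ω → ℝ) (hHi : ∀ s, Measurable (Hi s))
    (hHi01 : ∀ s ω, Hi s ω = 0 ∨ Hi s ω = 1)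
    (hHiP : ∀ s, μ {ω | Hi s ω = 1} = ENNReal.ofReal (pi s))
    (hindep : iIndepFun (Sum.elim Hi Yt) μ)
    (Yi : Fin D → Ω → ℝ) (hYi : Yi = fun s ω => Hi s ω * Yt s ω)
    (G Gtilde : Ω → ℝ)
    (hG : G = fun ω => ∑ s, (Yi s ω) ^ 2)
    (hGt : Gtilde = fun ω => G ω / ∑ s, pi s) :
    ∫ ω, Gtilde ω ^ 2 ∂μ - (∫ ω, Gtilde ω ∂μ) ^ 2 =
      Kii ^ 2 * (∑ s, pi s * (3 - pi s)) / (∑ s, pi s) ^ 2 := by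
  classical
  set v : ℝ≥0 := Real.toNNReal Kii with hvdef
  have hv : v ≠ 0 := by
    simp only [hvdef, ne_eq, Real.toNNReal_eq_zero, not_le]
    exact hKii
  have hvK : ((v : ℝ≥0) : ℝ) = Kii := Real.coe_toNNReal _ hKii.le
  -- moments of Yt
  have hYpow_meas : ∀ (k : ℕ), AEStronglyMeasurable (fun x : ℝ => x ^ k) (gaussianReal 0 v) :=
    fun k => (measurable_id.pow_const k).aestronglyMeasurable
  have hYint : ∀ (s : Fin D) (k : ℕ), Integrable (fun ω => Yt s ω ^ k) μ := by
    intro s k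
    have h1 : Integrable (fun x : ℝ => x ^ k) (μ.map (Yt s)) := by
      rw [hYtlaw s]; exact gaussianReal_pow_integrable v hv k
    exact (integrable_map_measure (by rw [hYtlaw s]; exact hYpow_meas k)
      (hYt s).aemeasurable).mp h1
  have hYmom : ∀ (s : Fin D) (k : ℕ),
      ∫ ω, Yt s ω ^ k ∂μ = ∫ x, x ^ k ∂(gaussianReal 0 v) := by
    intro s k
    rw [← hYtlaw s, integral_map (hYt s).aemeasurable (by rw [hYtlaw s]; exact hYpow_meas k)]
  have hY2 : ∀ s, ∫ ω, Yt s ω ^ 2 ∂μ = Kii := by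
    intro s; rw [hYmom s 2, integral_sq_gaussianReal v hv, hvK]
  have hY4 : ∀ s, ∫ ω, Yt s ω ^ 4 ∂μ = 3 * Kii ^ 2 := by
    intro s; rw [hYmom s 4, integral_pow_four_gaussianReal v hv, hvK]
  -- facts about Hi
  have hHsq : ∀ s ω, Hi s ω ^ 2 = Hi s ω := by
    intro s ω; rcases hHi01 s ω with h | h <;> rw [h] <;> norm_num
  have hHmean : ∀ s, ∫ ω, Hi s ω ∂μ = pi s := by
    intro s
    have hset : MeasurableSet {ω | Hi s ω = 1} := (hHi s) (measurableSet_singleton 1)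
    have hind : (fun ω => Hi s ω)
        = Set.indicator {ω | Hi s ω = 1} (fun _ => (1:ℝ)) := by
      funext ω
      rcases hHi01 s ω with h | h
      · rw [h, Set.indicator_of_notMem]
        simp [Set.mem_setOf_eq, h]
      · rw [h, Set.indicator_of_mem]
        exact h
    rw [hind, integral_indicator_const _ hset, measureReal_def, hHiP s, smul_eq_mul, mul_one,
      ENNReal.toReal_ofReal (hpi s).1.le]
  -- the summands
  set X : Fin D → Ω → ℝ := fun s ω => Hi s ω * Yt s ω ^ 2 with hXdef
  have hXmeas : ∀ s, Measurable (X s) := fun s => (hHi s).mul ((hYt s).pow_const 2)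
  have hXint : ∀ s, Integrable (X s) μ := by
    intro s
    refine (hYint s 2).mono' (hXmeas s).aestronglyMeasurable
      (Eventually.of_forall fun ω => ?_)
    rcases hHi01 s ω with h | h <;>
      simp [hXdef, h, abs_of_nonneg (sq_nonneg (Yt s ω)), sq_nonneg]
  have hmeasSum : ∀ i : Fin D ⊕ Fin D, Measurable (Sum.elim Hi Yt i) := by
    intro i; cases i with
    | inl s => exact hHi s
    | inr s => exact hYt s
  -- independence of Hi s and powers of Yt s
  have hindepHY : ∀ (s : Fin D) (k : ℕ),
      IndepFun (Hi s) (fun ω => Yt s ω ^ k) μ := by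
    intro s k
    have h := hindep.indepFun (show (Sum.inl s : Fin D ⊕ Fin D) ≠ Sum.inr s by simp)
    exact h.comp measurable_id (measurable_id.pow_const k)
  have hEX : ∀ s, ∫ ω, X s ω ∂μ = pi s * Kii := by
    intro s
    have h := (hindepHY s 2).integral_mul_eq_mul_integral (hHi s).aestronglyMeasurable
      ((hYt s).pow_const 2).aestronglyMeasurable
    calc ∫ ω, X s ω ∂μ = ∫ ω, (Hi s * fun ω => Yt s ω ^ 2) ω ∂μ := rfl
      _ = (∫ ω, Hi s ω ∂μ) * ∫ ω, Yt s ω ^ 2 ∂μ := h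
      _ = pi s * Kii := by rw [hHmean s, hY2 s]
  have hEX2 : ∀ s, ∫ ω, X s ω ^ 2 ∂μ = pi s * (3 * Kii ^ 2) := by
    intro s
    have h := (hindepHY s 4).integral_mul_eq_mul_integral (hHi s).aestronglyMeasurable
      ((hYt s).pow_const 4).aestronglyMeasurable
    have hptws : (fun ω => X s ω ^ 2) = (Hi s * fun ω => Yt s ω ^ 4) := by
      funext ω
      show (Hi s ω * Yt s ω ^ 2) ^ 2 = Hi s ω * Yt s ω ^ 4
      rw [mul_pow, hHsq s ω]; ring
    calc ∫ ω, X s ω ^ 2 ∂μ = ∫ ω, (Hi s * fun ω => Yt s ω ^ 4) ω ∂μ := by rw [hptws]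
      _ = (∫ ω, Hi s ω ∂μ) * ∫ ω, Yt s ω ^ 4 ∂μ := h
      _ = pi s * (3 * Kii ^ 2) := by rw [hHmean s, hY4 s]
  -- independence of distinct summands
  have hXXindep : ∀ s t : Fin D, s ≠ t → IndepFun (X s) (X t) μ := by
    intro s t hst
    have h := hindep.indepFun_prodMk_prodMk hmeasSum
      (Sum.inl s) (Sum.inr s) (Sum.inl t) (Sum.inr t)
      (by simp [hst]) (by simp) (by simp) (by simp [hst])
    exact h.comp (measurable_fst.mul (measurable_snd.pow_const 2))
      (measurable_fst.mul (measurable_snd.pow_const 2))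
  have hXX : ∀ s t : Fin D,
      ∫ ω, X s ω * X t ω ∂μ
        = if s = t then pi s * (3 * Kii ^ 2) else (pi s * Kii) * (pi t * Kii) := by
    intro s t
    by_cases hst : s = t
    · subst hst
      rw [if_pos rfl, ← hEX2 s]
      exact integral_congr_ae (Eventually.of_forall fun ω => (sq (X s ω)).symm)
    · rw [if_neg hst]
      have h := (hXXindep s t hst).integral_mul_eq_mul_integral (hXmeas s).aestronglyMeasurable
        (hXmeas t).aestronglyMeasurable
      calc ∫ ω, X s ω * X t ω ∂μ = ∫ ω, (X s * X t) ω ∂μ := rfl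
        _ = (∫ ω, X s ω ∂μ) * ∫ ω, X t ω ∂μ := h
        _ = (pi s * Kii) * (pi t * Kii) := by rw [hEX s, hEX t]
  have hXXint : ∀ s t : Fin D, Integrable (fun ω => X s ω * X t ω) μ := by
    intro s t
    by_cases hst : s = t
    · subst hst
      refine (hYint s 4).mono' ((hXmeas s).mul (hXmeas s)).aestronglyMeasurable
        (Eventually.of_forall fun ω => ?_)
      rcases hHi01 s ω with h | h <;>
        · show |Hi s ω * Yt s ω ^ 2 * (Hi s ω * Yt s ω ^ 2)| ≤ Yt s ω ^ 4
          rw [h]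
          simp [abs_of_nonneg, sq_nonneg, pow_succ, pow_zero]
          nlinarith [sq_nonneg (Yt s ω), sq_nonneg (Yt s ω ^ 2)]
    · exact (hXXindep s t hst).integrable_mul (hXint s) (hXint t)
  -- rewrite G
  have hGX : G = fun ω => ∑ s, X s ω := by
    funext ω
    rw [hG]
    refine Finset.sum_congr rfl fun s _ => ?_
    rw [hYi]
    show (Hi s ω * Yt s ω) ^ 2 = Hi s ω * Yt s ω ^ 2
    rw [mul_pow, hHsq s ω]
  set S : ℝ := ∑ s, pi s with hSdef
  have hSpos : 0 < S := Finset.sum_pos (fun s _ => (hpi s).1)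
    (Finset.univ_nonempty_iff.mpr ⟨⟨0, hD⟩⟩)
  -- first moment of G
  have hEG : ∫ ω, G ω ∂μ = Kii * S := by
    rw [hGX, integral_finset_sum _ (fun s _ => hXint s)]
    calc (∑ s, ∫ ω, X s ω ∂μ) = ∑ s, pi s * Kii :=
          Finset.sum_congr rfl fun s _ => hEX s
      _ = Kii * S := by rw [hSdef, Finset.mul_sum]; exact Finset.sum_congr rfl fun s _ => by ring
  -- second moment of G
  have hEG2 : ∫ ω, G ω ^ 2 ∂μ
      = ∑ s, ∑ t, (if s = t then pi s * (3 * Kii ^ 2) else (pi s * Kii) * (pi t * Kii)) := by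
    have hsq : (fun ω => G ω ^ 2) = fun ω => ∑ s, ∑ t, X s ω * X t ω := by
      funext ω
      rw [hGX, sq, Finset.sum_mul_sum]
    rw [hsq, integral_finset_sum _ (fun s _ => integrable_finset_sum _ (fun t _ => hXXint s t))]
    refine Finset.sum_congr rfl fun s _ => ?_
    rw [integral_finset_sum _ (fun t _ => hXXint s t)]
    exact Finset.sum_congr rfl fun t _ => hXX s t
  -- variance of G
  have hVarG : ∫ ω, G ω ^ 2 ∂μ - (∫ ω, G ω ∂μ) ^ 2 = Kii ^ 2 * ∑ s, pi s * (3 - pi s) := by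
    rw [hEG2, hEG]
    have hKS : (Kii * S) ^ 2 = ∑ s, ∑ t, Kii ^ 2 * (pi s * pi t) := by
      rw [mul_pow, sq S, hSdef, Finset.sum_mul_sum, Finset.mul_sum]
      refine Finset.sum_congr rfl fun s _ => ?_
      rw [Finset.mul_sum]
    rw [hKS, ← Finset.sum_sub_distrib]
    have hinner : ∀ s : Fin D,
        ((∑ t, (if s = t then pi s * (3 * Kii ^ 2) else (pi s * Kii) * (pi t * Kii)))
          - ∑ t, Kii ^ 2 * (pi s * pi t))
        = Kii ^ 2 * (pi s * (3 - pi s)) := by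
      intro s
      rw [← Finset.sum_sub_distrib]
      have hterm : ∀ t : Fin D,
          (if s = t then pi s * (3 * Kii ^ 2) else (pi s * Kii) * (pi t * Kii))
            - Kii ^ 2 * (pi s * pi t)
          = if t = s then Kii ^ 2 * (pi s * (3 - pi s)) else 0 := by
        intro t
        by_cases hst : s = t
        · subst hst; rw [if_pos rfl, if_pos rfl]; ring
        · rw [if_neg hst, if_neg (Ne.symm hst)]; ring
      rw [Finset.sum_congr rfl fun t _ => hterm t, Finset.sum_ite_eq']
      simp
    rw [Finset.sum_congr rfl fun s _ => hinner s, ← Finset.mul_sum]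
  -- conclude
  have hSne : S ≠ 0 := ne_of_gt hSpos
  have hGt1 : ∫ ω, Gtilde ω ∂μ = (∫ ω, G ω ∂μ) / S := by
    rw [hGt]; exact integral_div S G
  have hGt2 : ∫ ω, Gtilde ω ^ 2 ∂μ = (∫ ω, G ω ^ 2 ∂μ) / S ^ 2 := by
    rw [hGt]
    have : (fun ω => (G ω / S) ^ 2) = fun ω => G ω ^ 2 / S ^ 2 := by
      funext ω; rw [div_pow]
    rw [this]; exact integral_div (S ^ 2) (fun ω => G ω ^ 2)
  rw [hGt1, hGt2, div_pow, ← sub_div, hVarG]
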